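/- Unbiasedness of the full UORO trajectory: define s̄_0 = 0, θ̄_0 = 0 and inductively s̄_{t+1} = ρ_0^{(t)} D_t s̄_t + ρ_1^{(t)} ν_t, θ̄_{t+1} = θ̄_t/ρ_0^{(t)} + ν_t^T H_t / ρ_1^{(t)}, where (ν_t) are independent vectors of independent ±1 signs, ν_t independent of the past, D_t, H_t deterministic matrices, and ρ_0^{(t)}, ρ_1^{(t)} deterministic positive scalars. Then for all t, E[s̄_t ⊗ θ̄_t] = G_t, where G_0 = 0 and G_{t+1} = D_t G_t + H_t. -/
import Mathlib


open Matrix BigOperators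

noncomputable def sgn (b : Bool) : ℝ := if b then 1 else -1

lemma sgn_not (b : Bool) : sgn (!b) = - sgn b := by cases b <;> simp [sgn]
lemma sgn_sq (b : Bool) : sgn b * sgn b = 1 := by cases b <;> simp [sgn]

lemma flip_invol {T n : ℕ} (t0 : Fin T) (k : Fin n) :
    Function.Involutive (fun σ : Fin T → Fin n → Bool =>
      Function.update σ t0 (Function.update (σ t0) k (!(σ t0 k)))) := by
  intro σ
  simp [Function.update_idem, Function.update_self]

lemma flip_sum_zero {T n : ℕ} (t0 : Fin T) (k : Fin n)
    (f : (Fin T → Fin n → Bool) → ℝ)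
    (hf : ∀ σ, f (Function.update σ t0 (Function.update (σ t0) k (!(σ t0 k)))) = f σ) :
    ∑ σ : Fin T → Fin n → Bool, f σ * sgn (σ t0 k) = 0 := by
  set g := fun σ : Fin T → Fin n → Bool =>
      Function.update σ t0 (Function.update (σ t0) k (!(σ t0 k))) with hg
  have hinv : Function.Involutive g := flip_invol t0 k
  have h1 : ∑ σ : Fin T → Fin n → Bool, f σ * sgn (σ t0 k)
      = ∑ σ : Fin T → Fin n → Bool, f (g σ) * sgn ((g σ) t0 k) :=
    (Fintype.sum_equiv hinv.toPerm _ _ (fun σ => rfl)).symm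
  have h2 : ∀ σ, f (g σ) * sgn ((g σ) t0 k) = -(f σ * sgn (σ t0 k)) := by
    intro σ
    rw [hf σ, hg]
    simp [sgn_not]
  simp_rw [h2, Finset.sum_neg_distrib] at h1
  linarith

/-- Unbiasedness of the full UORO trajectory over a horizon `T`: with
`s̄ 0 = 0`, `θ̄ 0 = 0` and the UORO updates
`s̄ (t+1) = ρ₀ t • D t s̄ t + ρ₁ t • ν t`,
`θ̄ (t+1) = (ρ₀ t)⁻¹ • θ̄ t + (ρ₁ t)⁻¹ • (ν t)ᵀ H t`,
driven by independent uniform sign vectors `ν 0, …, ν (T−1)` (the sample space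
is `Fin T → Fin n → Bool` with uniform probability `2^{-nT}`), one has
`E[s̄ t ⊗ θ̄ t] = G t` for all `t ≤ T`, where `G 0 = 0` and
`G (t+1) = D t * G t + H t`. -/
theorem uoro_trajectory_unbiased (n p T : ℕ)
    (D : ℕ → Matrix (Fin n) (Fin n) ℝ) (H : ℕ → Matrix (Fin n) (Fin p) ℝ)
    (ρ₀ ρ₁ : ℕ → ℝ) (hρ₀ : ∀ t, 0 < ρ₀ t) (hρ₁ : ∀ t, 0 < ρ₁ t)
    (sbar : ℕ → (Fin T → Fin n → Bool) → Fin n → ℝ)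
    (θbar : ℕ → (Fin T → Fin n → Bool) → Fin p → ℝ)
    (hs0 : ∀ σ, sbar 0 σ = 0) (hθ0 : ∀ σ, θbar 0 σ = 0)
    (hsrec : ∀ t (h : t + 1 ≤ T) σ,
      sbar (t + 1) σ =
        ρ₀ t • (D t).mulVec (sbar t σ) + ρ₁ t • fun i => sgn (σ ⟨t, h⟩ i))
    (hθrec : ∀ t (h : t + 1 ≤ T) σ,
      θbar (t + 1) σ =
        (ρ₀ t)⁻¹ • θbar t σ + (ρ₁ t)⁻¹ • ((fun i => sgn (σ ⟨t, h⟩ i)) ᵥ* H t))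
    (G : ℕ → Matrix (Fin n) (Fin p) ℝ)
    (hG0 : G 0 = 0) (hGrec : ∀ t, G (t + 1) = D t * G t + H t) :
    ∀ t ≤ T,
      ((2 : ℝ) ^ (n * T))⁻¹ •
          ∑ σ : Fin T → Fin n → Bool, vecMulVec (sbar t σ) (θbar t σ) = G t := by
  have dep : ∀ t, t ≤ T → ∀ σ σ' : Fin T → Fin n → Bool,
      (∀ j : Fin T, (j : ℕ) < t → σ j = σ' j) →
      sbar t σ = sbar t σ' ∧ θbar t σ = θbar t σ' := by
    intro t
    induction t with
    | zero => intro _ σ σ' _; rw [hs0, hs0, hθ0, hθ0]; exact ⟨rfl, rfl⟩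
    | succ t ih =>
      intro ht σ σ' hagree
      have ht' : t ≤ T := Nat.le_of_succ_le ht
      obtain ⟨hs, hθ⟩ := ih ht' σ σ' (fun j hj => hagree j (Nat.lt_succ_of_lt hj))
      have hν : σ ⟨t, ht⟩ = σ' ⟨t, ht⟩ := hagree ⟨t, ht⟩ (Nat.lt_succ_self t)
      constructor
      · rw [hsrec t ht σ, hsrec t ht σ', hs, hν]
      · rw [hθrec t ht σ, hθrec t ht σ', hθ, hν]
  have hc0 : ((2 : ℝ) ^ (n * T)) ≠ 0 := by positivity
  have hcard : ∑ _σ : Fin T → Fin n → Bool, (1 : ℝ) = (2 : ℝ) ^ (n * T) := by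
    rw [Finset.sum_const, Finset.card_univ, nsmul_eq_mul, mul_one]
    simp [Fintype.card_fun, pow_mul]
  intro t
  induction t with
  | zero =>
    intro _
    rw [hG0]
    refine smul_eq_zero_of_right _ (Finset.sum_eq_zero fun σ _ => ?_)
    rw [hs0]
    ext i j
    simp [Matrix.vecMulVec_apply]
  | succ t ih =>
    intro ht
    have htT : t ≤ T := Nat.le_of_succ_le ht
    have IH := ih htT
    have IH' : ∀ (m : Fin n) (j : Fin p),
        ∑ σ : Fin T → Fin n → Bool, sbar t σ m * θbar t σ j
          = (2 : ℝ) ^ (n * T) * G t m j := by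
      intro m j
      have h := congrArg (fun M : Matrix (Fin n) (Fin p) ℝ => M m j) IH
      simp only [Matrix.smul_apply, Matrix.sum_apply, Matrix.vecMulVec_apply,
        smul_eq_mul] at h
      rw [← h, ← mul_assoc, mul_inv_cancel₀ hc0, one_mul]
    have hinv_s : ∀ (k : Fin n) σ,
        sbar t (Function.update σ ⟨t, ht⟩ (Function.update (σ ⟨t, ht⟩) k
          (!(σ ⟨t, ht⟩ k)))) = sbar t σ := by
      intro k σ
      refine (dep t htT _ σ ?_).1
      intro j hj
      have hne : j ≠ ⟨t, ht⟩ := by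
        intro he; rw [he] at hj; exact lt_irrefl _ hj
      exact Function.update_of_ne hne _ _
    have hinv_θ : ∀ (k : Fin n) σ,
        θbar t (Function.update σ ⟨t, ht⟩ (Function.update (σ ⟨t, ht⟩) k
          (!(σ ⟨t, ht⟩ k)))) = θbar t σ := by
      intro k σ
      refine (dep t htT _ σ ?_).2
      intro j hj
      have hne : j ≠ ⟨t, ht⟩ := by
        intro he; rw [he] at hj; exact lt_irrefl _ hj
      exact Function.update_of_ne hne _ _
    ext i j
    rw [hGrec]
    simp only [Matrix.smul_apply, Matrix.sum_apply, Matrix.vecMulVec_apply,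
      smul_eq_mul, Matrix.add_apply, Matrix.mul_apply]
    have expand : ∀ σ : Fin T → Fin n → Bool,
        sbar (t + 1) σ i * θbar (t + 1) σ j =
          (D t).mulVec (sbar t σ) i * θbar t σ j
          + (ρ₀ t * (ρ₁ t)⁻¹) *
              ((D t).mulVec (sbar t σ) i * ∑ k, sgn (σ ⟨t, ht⟩ k) * H t k j)
          + (ρ₁ t * (ρ₀ t)⁻¹) * (θbar t σ j * sgn (σ ⟨t, ht⟩ i))
          + ∑ k, (sgn (σ ⟨t, ht⟩ i) * sgn (σ ⟨t, ht⟩ k)) * H t k j := by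
      intro σ
      rw [hsrec t ht, hθrec t ht]
      simp only [Pi.add_apply, Pi.smul_apply, smul_eq_mul, Matrix.vecMul,
        dotProduct]
      have hS : ∑ k, (sgn (σ ⟨t, ht⟩ i) * sgn (σ ⟨t, ht⟩ k)) * H t k j
          = sgn (σ ⟨t, ht⟩ i) * ∑ k, sgn (σ ⟨t, ht⟩ k) * H t k j := by
        rw [Finset.mul_sum]; exact Finset.sum_congr rfl fun k _ => by ring
      rw [hS]
      have h0 : ρ₀ t ≠ 0 := (hρ₀ t).ne'
      have h1 : ρ₁ t ≠ 0 := (hρ₁ t).ne'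
      field_simp
      ring
    simp_rw [expand, Finset.sum_add_distrib]
    have hT1 : ∑ σ : Fin T → Fin n → Bool, (D t).mulVec (sbar t σ) i * θbar t σ j
        = (2 : ℝ) ^ (n * T) * ∑ m, D t i m * G t m j := by
      simp only [Matrix.mulVec, dotProduct]
      calc ∑ σ : Fin T → Fin n → Bool, (∑ m, D t i m * sbar t σ m) * θbar t σ j
          = ∑ σ : Fin T → Fin n → Bool, ∑ m, D t i m * (sbar t σ m * θbar t σ j) := by
            refine Finset.sum_congr rfl fun σ _ => ?_
            rw [Finset.sum_mul]
            exact Finset.sum_congr rfl fun m _ => by ring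
        _ = ∑ m, D t i m * ∑ σ : Fin T → Fin n → Bool, sbar t σ m * θbar t σ j := by
            rw [Finset.sum_comm]
            exact Finset.sum_congr rfl fun m _ => (Finset.mul_sum _ _ _).symm
        _ = (2 : ℝ) ^ (n * T) * ∑ m, D t i m * G t m j := by
            simp_rw [IH']
            rw [Finset.mul_sum]
            exact Finset.sum_congr rfl fun m _ => by ring
    have hT2 : ∑ σ : Fin T → Fin n → Bool,
        (ρ₀ t * (ρ₁ t)⁻¹) *
          ((D t).mulVec (sbar t σ) i * ∑ k, sgn (σ ⟨t, ht⟩ k) * H t k j) = 0 := by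
      rw [← Finset.mul_sum]
      have h0 : ∑ σ : Fin T → Fin n → Bool,
          (D t).mulVec (sbar t σ) i * ∑ k, sgn (σ ⟨t, ht⟩ k) * H t k j = 0 := by
        calc ∑ σ : Fin T → Fin n → Bool,
              (D t).mulVec (sbar t σ) i * ∑ k, sgn (σ ⟨t, ht⟩ k) * H t k j
            = ∑ σ : Fin T → Fin n → Bool, ∑ k,
                ((D t).mulVec (sbar t σ) i * sgn (σ ⟨t, ht⟩ k)) * H t k j := by
              refine Finset.sum_congr rfl fun σ _ => ?_
              rw [Finset.mul_sum]
              exact Finset.sum_congr rfl fun k _ => by ring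
          _ = ∑ k, (∑ σ : Fin T → Fin n → Bool,
                (D t).mulVec (sbar t σ) i * sgn (σ ⟨t, ht⟩ k)) * H t k j := by
              rw [Finset.sum_comm]
              exact Finset.sum_congr rfl fun k _ => (Finset.sum_mul _ _ _).symm
          _ = 0 := by
              refine Finset.sum_eq_zero fun k _ => ?_
              rw [flip_sum_zero ⟨t, ht⟩ k _ (fun σ => by rw [hinv_s k σ]), zero_mul]
      rw [h0, mul_zero]
    have hT3 : ∑ σ : Fin T → Fin n → Bool,
        (ρ₁ t * (ρ₀ t)⁻¹) * (θbar t σ j * sgn (σ ⟨t, ht⟩ i)) = 0 := by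
      rw [← Finset.mul_sum,
        flip_sum_zero ⟨t, ht⟩ i _ (fun σ => by rw [hinv_θ i σ]), mul_zero]
    have hT4 : ∑ σ : Fin T → Fin n → Bool,
        ∑ k, (sgn (σ ⟨t, ht⟩ i) * sgn (σ ⟨t, ht⟩ k)) * H t k j
          = (2 : ℝ) ^ (n * T) * H t i j := by
      rw [Finset.sum_comm]
      have hk : ∀ k : Fin n,
          ∑ σ : Fin T → Fin n → Bool, sgn (σ ⟨t, ht⟩ i) * sgn (σ ⟨t, ht⟩ k)
            = if k = i then (2 : ℝ) ^ (n * T) else 0 := by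
        intro k
        by_cases hki : k = i
        · subst hki
          simp_rw [sgn_sq]
          simp [hcard]
        · rw [if_neg hki]
          refine flip_sum_zero ⟨t, ht⟩ k _ (fun σ => ?_)
          congr 1
          rw [Function.update_self, Function.update_of_ne (Ne.symm hki)]
      calc ∑ k, ∑ σ : Fin T → Fin n → Bool,
            (sgn (σ ⟨t, ht⟩ i) * sgn (σ ⟨t, ht⟩ k)) * H t k j
          = ∑ k, (if k = i then (2 : ℝ) ^ (n * T) else 0) * H t k j := by
            refine Finset.sum_congr rfl fun k _ => ?_
            rw [← Finset.sum_mul, hk k]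
        _ = (2 : ℝ) ^ (n * T) * H t i j := by
            simp [Finset.sum_ite_eq, ite_mul]
    rw [hT1, hT2, hT3, hT4]
    field_simp
    ring
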